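/- arXiv:2605.23529 — 7 statements merged into one kernel-verified Lean document; each statement's English description precedes it below -/
import Mathlib

section
/- Let n ≥ 1, let p be a monic polynomial of degree n with real coefficients, and let z_1,…,z_n ∈ ℂ be its complex roots listed with multiplicity, i.e. the image of p in ℂ[X] equals ∏_{i=1}^n (X − z_i). Define Q(λ) = ∏_{1 ≤ i < j ≤ n} (λ + (z_i − z_j)²) ∈ ℂ[λ]. If every coefficient of Q has zero imaginary part and nonnegative real part, then every root z_i is real. -/
open Polynomial

/-- Type `A` chamber-image criterion: let `p` be a monic real polynomial of degree
`n ≥ 1` with complex roots `z 1, …, z n` (with multiplicity), and let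
`Q(λ) = ∏_{i<j} (λ + (z i - z j)²)`.  If every coefficient of `Q` has zero
imaginary part and nonnegative real part, then every root `z i` is real. -/
theorem realRoots_of_pairDiff_coeff_nonneg (n : ℕ) (hn : 1 ≤ n)
    (p : Polynomial ℝ) (hmon : p.Monic) (hdeg : p.natDegree = n)
    (z : Fin n → ℂ)
    (hroots : p.map (algebraMap ℝ ℂ)
      = ∏ i : Fin n, (Polynomial.X - Polynomial.C (z i)))
    (Q : Polynomial ℂ)
    (hQ : Q = ∏ i : Fin n, ∏ j ∈ Finset.Ioi i,
        (Polynomial.X + Polynomial.C ((z i - z j) ^ 2)))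
    (hcoeff : ∀ m : ℕ, (Q.coeff m).im = 0 ∧ 0 ≤ (Q.coeff m).re) :
    ∀ i : Fin n, (z i).im = 0 := by
  intro i
  by_contra him
  -- conjugate of z i is also a root
  have hconj : ∃ j : Fin n, z j = (starRingEnd ℂ) (z i) := by
    have h1 : (p.map (algebraMap ℝ ℂ)).eval (z i) = 0 := by
      rw [hroots, eval_prod]
      exact Finset.prod_eq_zero (Finset.mem_univ i) (by simp)
    have h2 : (p.map (algebraMap ℝ ℂ)).eval ((starRingEnd ℂ) (z i)) = 0 := by
      have := congrArg (starRingEnd ℂ) h1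
      rw [map_zero] at this
      rw [← this, eval_map, eval_map, Polynomial.hom_eval₂]
      congr 1
      ext x
      simp [Complex.conj_ofReal]
    rw [hroots, eval_prod] at h2
    obtain ⟨j, -, hj⟩ := Finset.prod_eq_zero_iff.mp h2
    refine ⟨j, ?_⟩
    have : (starRingEnd ℂ) (z i) - z j = 0 := by simpa using hj
    linear_combination -this
  obtain ⟨j, hj⟩ := hconj
  have hij : i ≠ j := by
    intro h
    apply him
    have := hj
    rw [← h] at this
    have h2 := congrArg Complex.im this
    simp [Complex.conj_im] at h2
    linarith
  set b : ℝ := (z i).im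
  set t : ℝ := 4 * b ^ 2
  have ht : 0 < t := by positivity
  -- the factor vanishes at t
  have hfac : ((z i - z j) ^ 2 : ℂ) = -(t : ℂ) := by
    rw [hj]
    have : z i - (starRingEnd ℂ) (z i) = (2 * b) * Complex.I := by
      apply Complex.ext <;> simp [Complex.conj_re, Complex.conj_im] <;> ring
    rw [this, mul_pow, Complex.I_sq]
    push_cast [t]
    ring
  -- Q vanishes at t
  have hQt : Q.eval (t : ℂ) = 0 := by
    rw [hQ, eval_prod]
    rcases lt_or_gt_of_ne hij with h | h
    · apply Finset.prod_eq_zero (Finset.mem_univ i)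
      rw [eval_prod]
      apply Finset.prod_eq_zero (Finset.mem_Ioi.mpr h)
      rw [eval_add, eval_X, eval_C, hfac]; ring
    · apply Finset.prod_eq_zero (Finset.mem_univ j)
      rw [eval_prod]
      apply Finset.prod_eq_zero (Finset.mem_Ioi.mpr h)
      have : ((z j - z i) ^ 2 : ℂ) = -(t : ℂ) := by rw [← hfac]; ring
      rw [eval_add, eval_X, eval_C, this]; ring
  -- Q is monic
  have hQm : Q.Monic := by
    rw [hQ]
    apply monic_prod_of_monic
    intro k _
    apply monic_prod_of_monic
    intro l _
    exact monic_X_add_C _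
  -- but eval at positive real t has positive real part
  set N := Q.natDegree
  have heval : Q.eval (t : ℂ) = ∑ m ∈ Finset.range (N + 1), Q.coeff m * (t : ℂ) ^ m :=
    Q.eval_eq_sum_range _
  have hre : (Q.eval (t : ℂ)).re = ∑ m ∈ Finset.range (N + 1), (Q.coeff m).re * t ^ m := by
    rw [heval, Complex.re_sum]
    refine Finset.sum_congr rfl fun m _ => ?_
    have : ((t : ℂ)) ^ m = ((t ^ m : ℝ) : ℂ) := by push_cast; ring
    rw [this, Complex.mul_re, Complex.ofReal_re, Complex.ofReal_im]
    simp
  have hpos : 0 < (Q.eval (t : ℂ)).re := by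
    rw [hre]
    apply Finset.sum_pos' (fun m _ => mul_nonneg (hcoeff m).2 (by positivity))
    refine ⟨N, Finset.self_mem_range_succ N, ?_⟩
    have : Q.coeff N = 1 := hQm.coeff_natDegree
    rw [this]
    simp
    positivity
  rw [hQt] at hpos
  simp at hpos
end

section
/- Let n ≥ 1, let p be a monic polynomial of degree n with real coefficients, and let y_1,…,y_n ∈ ℂ be its complex roots listed with multiplicity, i.e. the image of p in ℂ[X] equals ∏_{i=1}^n (X − y_i). Define Q(λ) = (∏_{i=1}^n (λ + y_i)) · ∏_{1 ≤ i < j ≤ n} ((λ + y_i + y_j)² − 4 y_i y_j) ∈ ℂ[λ]. If every coefficient of Q has zero imaginary part and nonnegative real part, then every y_i is a real number and y_i ≥ 0. -/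
/-- Type `B` chamber-image criterion: let `p` be a monic real polynomial of degree
`n ≥ 1` with complex roots `y 1, …, y n` (with multiplicity), and let
`Q(λ) = (∏_i (λ + y i)) * ∏_{i<j} ((λ + y i + y j)² - 4 y i y j)`.
If every coefficient of `Q` has zero imaginary part and nonnegative real part,
then every `y i` is real and nonnegative. -/
theorem nonnegRealRoots_of_B_coeff_nonneg (n : ℕ) (hn : 1 ≤ n)
    (p : Polynomial ℝ) (hmon : p.Monic) (hdeg : p.natDegree = n)
    (y : Fin n → ℂ)
    (hroots : p.map (algebraMap ℝ ℂ)
      = ∏ i : Fin n, (Polynomial.X - Polynomial.C (y i)))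
    (Q : Polynomial ℂ)
    (hQ : Q = (∏ i : Fin n, (Polynomial.X + Polynomial.C (y i))) *
        ∏ i : Fin n, ∏ j ∈ Finset.Ioi i,
          ((Polynomial.X + Polynomial.C (y i + y j)) ^ 2
            - Polynomial.C (4 * y i * y j)))
    (hcoeff : ∀ m : ℕ, (Q.coeff m).im = 0 ∧ 0 ≤ (Q.coeff m).re) :
    ∀ i : Fin n, (y i).im = 0 ∧ 0 ≤ (y i).re := by
  -- Q is monic
  have hmono : Q.Monic := by
    rw [hQ]
    refine (Polynomial.monic_prod_of_monic _ _ fun i _ => Polynomial.monic_X_add_C _).mul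
      (Polynomial.monic_prod_of_monic _ _ fun i _ =>
        Polynomial.monic_prod_of_monic _ _ fun j _ => ?_)
    have h1 : ((Polynomial.X + Polynomial.C (y i + y j)) ^ 2).Monic :=
      (Polynomial.monic_X_add_C _).pow 2
    have hdeg2 : ((Polynomial.X + Polynomial.C (y i + y j)) ^ 2).degree = 2 := by
      rw [Polynomial.degree_pow, Polynomial.degree_X_add_C]
      rfl
    have h2 : (-Polynomial.C (4 * y i * y j)).degree
        < ((Polynomial.X + Polynomial.C (y i + y j)) ^ 2).degree := by
      rw [hdeg2, Polynomial.degree_neg]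
      exact lt_of_le_of_lt (Polynomial.degree_C_le) (by norm_num)
    have := h1.add_of_left h2
    simpa [sub_eq_add_neg] using this
  -- Q doesn't vanish at positive reals
  have hpos : ∀ t : ℝ, 0 < t → Q.eval (t : ℂ) ≠ 0 := by
    intro t ht h0
    have hev : Q.eval (t : ℂ) = ∑ m ∈ Finset.range (Q.natDegree + 1),
        Q.coeff m * (t : ℂ) ^ m := Polynomial.eval_eq_sum_range _
    have hre : (Q.eval (t : ℂ)).re
        = ∑ m ∈ Finset.range (Q.natDegree + 1), (Q.coeff m).re * t ^ m := by
      rw [hev, Complex.re_sum]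
      refine Finset.sum_congr rfl fun m _ => ?_
      have hc : ((t : ℂ)) ^ m = ((t ^ m : ℝ) : ℂ) := by push_cast; ring
      rw [hc, Complex.mul_re, Complex.ofReal_re, Complex.ofReal_im]
      ring
    have hlt : 0 < (Q.eval (t : ℂ)).re := by
      rw [hre]
      refine Finset.sum_pos' (fun m _ => mul_nonneg (hcoeff m).2 (pow_nonneg ht.le m))
        ⟨Q.natDegree, Finset.self_mem_range_succ _, ?_⟩
      rw [hmono.coeff_natDegree]
      simpa using pow_pos ht Q.natDegree
    rw [h0] at hlt
    simp at hlt
  -- conjugates of roots are roots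
  have hconjprod : (∏ i : Fin n, (Polynomial.X - Polynomial.C ((starRingEnd ℂ) (y i))))
      = ∏ i : Fin n, (Polynomial.X - Polynomial.C (y i)) := by
    have hmm := congrArg (Polynomial.map (starRingEnd ℂ)) hroots
    rw [Polynomial.map_map] at hmm
    have heq : (starRingEnd ℂ).comp (algebraMap ℝ ℂ) = algebraMap ℝ ℂ := by
      ext x; simp [Complex.conj_ofReal]
    rw [heq, hroots, Polynomial.map_prod] at hmm
    simpa using hmm.symm
  have hconjroot : ∀ i : Fin n, ∃ j : Fin n, y j = (starRingEnd ℂ) (y i) := by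
    intro i
    have h0 : Polynomial.eval ((starRingEnd ℂ) (y i))
        (∏ j : Fin n, (Polynomial.X - Polynomial.C (y j))) = 0 := by
      rw [← hconjprod, Polynomial.eval_prod]
      exact Finset.prod_eq_zero (Finset.mem_univ i) (by simp)
    rw [Polynomial.eval_prod, Finset.prod_eq_zero_iff] at h0
    obtain ⟨j, -, hj⟩ := h0
    refine ⟨j, ?_⟩
    have : (starRingEnd ℂ) (y i) - y j = 0 := by simpa using hj
    linear_combination -this
  -- if a pair factor vanishes at t then Q vanishes at t
  have hQfac : ∀ (i j : Fin n), i ≠ j → ∀ t : ℂ,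
      (t + (y i + y j)) ^ 2 - 4 * y i * y j = 0 → Q.eval t = 0 := by
    intro i j hij t hf
    rw [hQ, Polynomial.eval_mul]
    apply mul_eq_zero_of_right
    rw [Polynomial.eval_prod]
    rcases hij.lt_or_gt with h | h
    · refine Finset.prod_eq_zero (Finset.mem_univ i) ?_
      rw [Polynomial.eval_prod]
      refine Finset.prod_eq_zero (Finset.mem_Ioi.mpr h) ?_
      simpa using hf
    · refine Finset.prod_eq_zero (Finset.mem_univ j) ?_
      rw [Polynomial.eval_prod]
      refine Finset.prod_eq_zero (Finset.mem_Ioi.mpr h) ?_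
      have hf' : (t + (y j + y i)) ^ 2 - 4 * y j * y i = 0 := by linear_combination hf
      simpa using hf'
  -- every root is real
  have him : ∀ i : Fin n, (y i).im = 0 := by
    intro i
    by_contra hb
    obtain ⟨j, hj⟩ := hconjroot i
    have hij : i ≠ j := by
      intro h
      rw [← h] at hj
      have := congrArg Complex.im hj
      simp [Complex.conj_im] at this
      exact hb (by linarith)
    set a := (y i).re with ha
    set b := (y i).im with hbdef
    have hsq : Real.sqrt (a ^ 2 + b ^ 2) ^ 2 = a ^ 2 + b ^ 2 :=
      Real.sq_sqrt (by positivity)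
    set t : ℝ := 2 * Real.sqrt (a ^ 2 + b ^ 2) - 2 * a with hts
    have htpos : 0 < t := by
      have hb2 : 0 < b ^ 2 := by positivity
      have h1 : |a| < Real.sqrt (a ^ 2 + b ^ 2) := by
        have h2 : a ^ 2 < a ^ 2 + b ^ 2 := by linarith
        calc |a| = Real.sqrt (a ^ 2) := by
              rw [Real.sqrt_sq_eq_abs]
          _ < _ := Real.sqrt_lt_sqrt (by positivity) h2
      have h3 := le_abs_self a
      rw [hts]; linarith
    have h1 : y i + y j = ((2 * a : ℝ) : ℂ) := by
      rw [hj]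
      apply Complex.ext <;> simp [Complex.conj_re, Complex.conj_im] <;> ring
    have h2 : y i * y j = ((a ^ 2 + b ^ 2 : ℝ) : ℂ) := by
      rw [hj, Complex.mul_conj]
      norm_cast
      rw [Complex.normSq_apply]; ring
    have hr : (t + 2 * a) ^ 2 - 4 * (a ^ 2 + b ^ 2) = 0 := by
      rw [hts]; nlinarith [hsq]
    have hfac : ((t : ℂ) + (y i + y j)) ^ 2 - 4 * y i * y j = 0 := by
      have h4 : (4 : ℂ) * y i * y j = 4 * (y i * y j) := by ring
      rw [h1, h4, h2]
      have hcast : ((t : ℂ) + ((2 * a : ℝ) : ℂ)) ^ 2 - 4 * ((a ^ 2 + b ^ 2 : ℝ) : ℂ)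
          = (((t + 2 * a) ^ 2 - 4 * (a ^ 2 + b ^ 2) : ℝ) : ℂ) := by
        push_cast; ring
      rw [hcast, hr]
      simp
    exact hpos t htpos (hQfac i j hij (t : ℂ) hfac)
  intro i
  refine ⟨him i, ?_⟩
  by_contra hneg
  push_neg at hneg
  have hyi : y i = (((y i).re : ℝ) : ℂ) := by
    apply Complex.ext <;> simp [him i]
  set t : ℝ := -(y i).re with hts
  have htpos : 0 < t := by rw [hts]; linarith
  have hz : Q.eval (t : ℂ) = 0 := by
    rw [hQ, Polynomial.eval_mul]
    apply mul_eq_zero_of_left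
    rw [Polynomial.eval_prod]
    refine Finset.prod_eq_zero (Finset.mem_univ i) ?_
    rw [hyi]
    simp [hts]
  exact hpos t htpos hz
end

section
/- Let n ≥ 2, let p be a monic polynomial of degree n with real coefficients, and let y_1,…,y_n ∈ ℂ be its complex roots listed with multiplicity, i.e. the image of p in ℂ[X] equals ∏_{i=1}^n (X − y_i). Define Q(λ) = ∏_{1 ≤ i < j ≤ n} ((λ + y_i + y_j)² − 4 y_i y_j) ∈ ℂ[λ]. If every coefficient of Q has zero imaginary part and nonnegative real part, and moreover the product y_1⋯y_n has nonnegative real part, then every y_i is a real number and y_i ≥ 0. -/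
open Polynomial


/-- Type `D` chamber-image criterion: let `p` be a monic real polynomial of degree
`n ≥ 2` with complex roots `y 1, …, y n` (with multiplicity), and let
`Q(λ) = ∏_{i<j} ((λ + y i + y j)² - 4 y i y j)`.  If every coefficient of `Q`
has zero imaginary part and nonnegative real part, and the product `y 1 ⋯ y n`
has nonnegative real part, then every `y i` is real and nonnegative. -/
theorem nonnegRealRoots_of_D_coeff_nonneg (n : ℕ) (hn : 2 ≤ n)
    (p : Polynomial ℝ) (hmon : p.Monic) (hdeg : p.natDegree = n)
    (y : Fin n → ℂ)
    (hroots : p.map (algebraMap ℝ ℂ)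
      = ∏ i : Fin n, (Polynomial.X - Polynomial.C (y i)))
    (Q : Polynomial ℂ)
    (hQ : Q = ∏ i : Fin n, ∏ j ∈ Finset.Ioi i,
        ((Polynomial.X + Polynomial.C (y i + y j)) ^ 2
          - Polynomial.C (4 * y i * y j)))
    (hcoeff : ∀ m : ℕ, (Q.coeff m).im = 0 ∧ 0 ≤ (Q.coeff m).re)
    (hprod : 0 ≤ (∏ i : Fin n, y i).re) :
    ∀ i : Fin n, (y i).im = 0 ∧ 0 ≤ (y i).re := by
  -- each factor is monic
  have hfacmon : ∀ a b : ℂ, ((X + C a) ^ 2 - C b).Monic := by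
    intro a b
    have h1 : ((X + C a) ^ 2).Monic := (monic_X_add_C a).pow 2
    have h2 : (-C b).degree < ((X + C a) ^ 2).degree := by
      rw [degree_neg, degree_pow, degree_X_add_C]
      exact lt_of_le_of_lt (degree_C_le) (by norm_num)
    have := h1.add_of_left h2
    simpa [sub_eq_add_neg] using this
  have hQmon : Q.Monic := by
    rw [hQ]
    exact monic_prod_of_monic _ _ fun i _ =>
      monic_prod_of_monic _ _ fun j _ => hfacmon _ _
  -- Q has no positive real root
  have hQne : ∀ t : ℝ, 0 < t → Q.eval (t : ℂ) ≠ 0 := by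
    intro t ht
    have hev : Q.eval (t : ℂ)
        = ∑ m ∈ Finset.range (Q.natDegree + 1), Q.coeff m * (t : ℂ) ^ m :=
      Q.eval_eq_sum_range (t:ℂ)
    have hre : (Q.eval (t : ℂ)).re
        = ∑ m ∈ Finset.range (Q.natDegree + 1), (Q.coeff m).re * t ^ m := by
      rw [hev, Complex.re_sum]
      refine Finset.sum_congr rfl fun m _ => ?_
      have : ((t : ℂ)) ^ m = ((t ^ m : ℝ) : ℂ) := by push_cast; ring
      rw [this, Complex.mul_re, Complex.ofReal_re, Complex.ofReal_im, mul_zero, sub_zero]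
    have hposre : 0 < (Q.eval (t : ℂ)).re := by
      rw [hre]
      refine Finset.sum_pos' (fun m _ => mul_nonneg (hcoeff m).2 (pow_nonneg ht.le m))
        ⟨Q.natDegree, Finset.self_mem_range_succ _, ?_⟩
      simpa [hQmon.coeff_natDegree] using pow_pos ht Q.natDegree
    intro h0
    rw [h0] at hposre
    simp at hposre
  -- pairwise contradiction lemma
  have key : ∀ i j : Fin n, i < j → ∀ t : ℝ, 0 < t →
      ((t : ℂ) + (y i + y j)) ^ 2 = 4 * y i * y j → False := by
    intro i j hij t ht heq
    apply hQne t ht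
    rw [hQ, Polynomial.eval_prod]
    refine Finset.prod_eq_zero (Finset.mem_univ i) ?_
    rw [Polynomial.eval_prod]
    refine Finset.prod_eq_zero (Finset.mem_Ioi.mpr hij) ?_
    simp only [eval_sub, eval_pow, eval_add, eval_X, eval_C]
    exact sub_eq_zero_of_eq heq
  have key2 : ∀ i j : Fin n, i ≠ j → ∀ t : ℝ, 0 < t →
      ((t : ℂ) + (y i + y j)) ^ 2 = 4 * y i * y j → False := by
    intro i j hij t ht heq
    rcases lt_or_gt_of_ne hij with h | h
    · exact key i j h t ht heq
    · exact key j i h t ht (by linear_combination heq)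
  -- conjugate symmetry of the root family
  have hconj : ∀ i : Fin n, ∃ j : Fin n, y j = (starRingEnd ℂ) (y i) := by
    have hmapeq : ∏ i : Fin n, (X - C ((starRingEnd ℂ) (y i)))
        = ∏ i : Fin n, (X - C (y i)) := by
      have h1 : (p.map (algebraMap ℝ ℂ)).map (starRingEnd ℂ)
          = p.map (algebraMap ℝ ℂ) := by
        rw [Polynomial.map_map]
        congr 1
        ext r
        simp [Complex.conj_ofReal]
      calc ∏ i : Fin n, (X - C ((starRingEnd ℂ) (y i)))
          = (∏ i : Fin n, (X - C (y i))).map (starRingEnd ℂ) := by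
            rw [Polynomial.map_prod]; simp
        _ = (p.map (algebraMap ℝ ℂ)).map (starRingEnd ℂ) := by rw [hroots]
        _ = p.map (algebraMap ℝ ℂ) := h1
        _ = _ := hroots
    have h2 : ∀ f : Fin n → ℂ, (∏ i : Fin n, (X - C (f i)))
        = (Multiset.map (fun a => X - C a) (Multiset.map f Finset.univ.val)).prod := by
      intro f
      rw [Multiset.map_map]
      rfl
    have hms : Multiset.map (fun i => (starRingEnd ℂ) (y i)) Finset.univ.val
        = Multiset.map y Finset.univ.val := by
      have h3 := congrArg Polynomial.roots hmapeq
      rwa [h2, h2, Polynomial.roots_multiset_prod_X_sub_C,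
        Polynomial.roots_multiset_prod_X_sub_C] at h3
    intro i
    have hmem : (starRingEnd ℂ) (y i) ∈ Multiset.map y Finset.univ.val := by
      rw [← hms]
      exact Multiset.mem_map_of_mem _ (Finset.mem_univ i)
    obtain ⟨j, _, hj⟩ := Multiset.mem_map.mp hmem
    exact ⟨j, hj⟩
  -- Step 1 : all roots are real
  have hreal : ∀ i, (y i).im = 0 := by
    intro i
    by_contra him
    obtain ⟨j, hj⟩ := hconj i
    have hne : i ≠ j := by
      intro h; rw [← h] at hj
      exact him (Complex.conj_eq_iff_im.mp hj.symm)
    have hsqlt : (y i).re ^ 2 < Complex.normSq (y i) := by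
      rw [Complex.normSq_apply]
      have h0 : 0 < (y i).im ^ 2 := (sq_nonneg _).lt_of_ne (Ne.symm (pow_ne_zero 2 him))
      nlinarith [h0]
    have h1 : (y i).re < Real.sqrt (Complex.normSq (y i)) := by
      calc (y i).re ≤ |(y i).re| := le_abs_self _
        _ = Real.sqrt ((y i).re ^ 2) := (Real.sqrt_sq_eq_abs _).symm
        _ < _ := Real.sqrt_lt_sqrt (sq_nonneg _) hsqlt
    set t : ℝ := 2 * (Real.sqrt (Complex.normSq (y i)) - (y i).re) with htdef
    have ht : 0 < t := by rw [htdef]; linarith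
    refine key2 i j hne t ht ?_
    have hr : (t + 2 * (y i).re) ^ 2 = 4 * Complex.normSq (y i) := by
      have h2 : Real.sqrt (Complex.normSq (y i)) ^ 2 = Complex.normSq (y i) :=
        Real.sq_sqrt (Complex.normSq_nonneg _)
      have h3 : t + 2 * (y i).re = 2 * Real.sqrt (Complex.normSq (y i)) := by
        rw [htdef]; ring
      rw [h3]; nlinarith [h2]
    rw [hj]
    have e1 : (t : ℂ) + (y i + (starRingEnd ℂ) (y i))
        = ((t + 2 * (y i).re : ℝ) : ℂ) := by
      rw [Complex.add_conj]; push_cast; ring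
    have e2 : 4 * y i * (starRingEnd ℂ) (y i)
        = ((4 * Complex.normSq (y i) : ℝ) : ℂ) := by
      rw [mul_assoc, Complex.mul_conj]; push_cast; ring
    rw [e1, e2]
    exact_mod_cast congrArg (Complex.ofReal) hr
  have hyre : ∀ k, y k = ((y k).re : ℂ) := fun k =>
    Complex.ext rfl (by simp [hreal k])
  -- Step 2 : all roots nonnegative
  intro i
  refine ⟨hreal i, ?_⟩
  by_contra hlt
  push_neg at hlt
  by_cases hex : ∃ j, j ≠ i ∧ (y j).re ≤ 0
  · obtain ⟨j, hji, hjle⟩ := hex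
    rcases lt_or_eq_of_le hjle with hjneg | hjzero
    · -- two negatives
      have hwpos : 0 < (y i).re * (y j).re := mul_pos_of_neg_of_neg hlt hjneg
      set w := (y i).re * (y j).re with hw
      set t : ℝ := -(y i).re - (y j).re + 2 * Real.sqrt w with htdef
      have ht : 0 < t := by
        have := Real.sqrt_nonneg w
        rw [htdef]; nlinarith
      refine key2 i j hji.symm t ht ?_
      have hr : (t + ((y i).re + (y j).re)) ^ 2 = 4 * (y i).re * (y j).re := by
        have h2 : Real.sqrt w ^ 2 = w := Real.sq_sqrt hwpos.le
        have h1 : t + ((y i).re + (y j).re) = 2 * Real.sqrt w := by rw [htdef]; ring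
        rw [h1, hw] at *
        nlinarith [h2]
      rw [hyre i, hyre j]
      exact_mod_cast congrArg (Complex.ofReal) hr
    · -- one negative, one zero
      have hyj0 : y j = 0 := Complex.ext hjzero (hreal j)
      refine key2 i j hji.symm (-(y i).re) (by linarith) ?_
      rw [hyre i, hyj0]
      push_cast
      simp only [Complex.ofReal_re]
      ring
  · -- only one negative root : product is negative
    push_neg at hex
    have hpos : ∀ j, j ≠ i → 0 < (y j).re := hex
    have hprodc : (∏ k : Fin n, y k) = ((∏ k : Fin n, (y k).re : ℝ) : ℂ) := by
      push_cast
      exact Finset.prod_congr rfl fun k _ => hyre k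
    have hre : (∏ k : Fin n, y k).re = ∏ k : Fin n, (y k).re := by
      rw [hprodc, Complex.ofReal_re]
    have hsplit : (y i).re * ∏ k ∈ Finset.univ.erase i, (y k).re
        = ∏ k : Fin n, (y k).re :=
      Finset.mul_prod_erase Finset.univ (fun k => (y k).re) (Finset.mem_univ i)
    have hrest : 0 < ∏ k ∈ Finset.univ.erase i, (y k).re :=
      Finset.prod_pos fun j hj => hpos j (Finset.ne_of_mem_erase hj)
    have : ∏ k : Fin n, (y k).re < 0 := by
      rw [← hsplit]; exact mul_neg_of_neg_of_pos hlt hrest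
    rw [hre] at hprod
    linarith
end

section
/- Let N ≥ 1 and fix i ∈ {1,…,N}. Define the power-sum map F : ℝ^N → ℝ^N by F(x) = (p_1(x),…,p_N(x)) with p_k(x) = Σ_{j=1}^N x_j^k. Let x* ∈ ℝ^N be nondecreasing (x*_1 ≤ … ≤ x*_N) and suppose x*_{i−1} < x*_i whenever i > 1 and x*_i < x*_{i+1} whenever i < N. Then there exist an open set U ⊆ ℝ^N containing F(x*) and a function φ : ℝ^N → ℝ of class C^∞ on U such that φ(F(x)) = x_i for every nondecreasing x ∈ ℝ^N with F(x) ∈ U. -/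
/-! Auxiliary development for smooth dependence of a separated ordered root
on the power sums. -/

noncomputable def pget (N : ℕ) (p : Fin N → ℝ) (m : ℕ) : ℝ :=
  if h : m - 1 < N then p ⟨m - 1, h⟩ else 0

noncomputable def newtE (N : ℕ) : ℕ → (Fin N → ℝ) → ℝ
  | 0 => fun _ => 1
  | (k+1) => fun p => (1/(k+1:ℝ)) * (-1)^(k+2) *
      ∑ j ∈ (Finset.range (k+1)).attach,
        (-1)^(j.1) * newtE N j.1 p * pget N p (k+1-j.1)
  termination_by k => k
  decreasing_by exact Finset.mem_range.mp j.2

noncomputable def psumR (N : ℕ) (x : Fin N → ℝ) (m : ℕ) : ℝ := ∑ j, x j ^ m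

noncomputable def esymmR (N : ℕ) (k : ℕ) (x : Fin N → ℝ) : ℝ :=
  (Multiset.map x Finset.univ.val).esymm k

noncomputable def Fp (N : ℕ) (x : Fin N → ℝ) : Fin N → ℝ := fun k => ∑ j, x j ^ ((k:ℕ)+1)

noncomputable def Gfun (N : ℕ) (p : Fin N → ℝ) (t : ℝ) : ℝ :=
  ∑ k ∈ Finset.range (N+1), (-1:ℝ)^k * newtE N k p * t^(N-k)

noncomputable def Gder (N : ℕ) (p : Fin N → ℝ) (t : ℝ) : ℝ :=
  ∑ k ∈ Finset.range (N+1), (-1:ℝ)^k * newtE N k p * (((N-k : ℕ):ℝ) * t^(N-k-1))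

noncomputable def Hfun (N : ℕ) : (Fin N → ℝ) × ℝ → (Fin N → ℝ) × ℝ :=
  fun z => (z.1, Gfun N z.1 z.2)

theorem esymmR_eq_aeval (N k : ℕ) (x : Fin N → ℝ) :
    esymmR N k x = MvPolynomial.aeval x (MvPolynomial.esymm (Fin N) ℝ k) := by
  rw [MvPolynomial.aeval_esymm_eq_multiset_esymm]; rfl

theorem newton_real (N k : ℕ) (x : Fin N → ℝ) :
    (k:ℝ) * esymmR N k x =
      (-1:ℝ)^(k+1) * ∑ j ∈ Finset.range k, (-1:ℝ)^j * esymmR N j x * psumR N x (k-j) := by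
  have h := congrArg (MvPolynomial.aeval x) (MvPolynomial.mul_esymm_eq_sum (Fin N) ℝ k)
  simp only [map_mul, map_sum, map_pow, map_natCast, map_neg, map_one,
    MvPolynomial.psum, MvPolynomial.aeval_X] at h
  rw [esymmR_eq_aeval]
  rw [h]
  congr 1
  rw [Finset.sum_filter, Finset.Nat.sum_antidiagonal_eq_sum_range_succ_mk,
    Finset.sum_range_succ]
  simp only [lt_self_iff_false, if_false, add_zero]
  apply Finset.sum_congr rfl
  intro j hj
  rw [if_pos (Finset.mem_range.mp hj)]
  rw [esymmR_eq_aeval]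
  simp [psumR]

theorem newtE_eq (N : ℕ) (x : Fin N → ℝ) (p : Fin N → ℝ)
    (hp : ∀ r : Fin N, p r = psumR N x ((r:ℕ)+1)) :
    ∀ k, k ≤ N → newtE N k p = esymmR N k x := by
  intro k
  induction k using Nat.strong_induction_on with
  | _ k ih =>
    match k with
    | 0 =>
      intro _
      simp [newtE, esymmR, Multiset.esymm]
    | (k+1) =>
      intro hkN
      rw [newtE]
      simp only []
      show (1/((k:ℝ)+1) * (-1)^(k+2) * ∑ j ∈ (Finset.range (k+1)).attach, (-1:ℝ)^(j.1) * newtE N j.1 p * pget N p (k+1-j.1)) = _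
      rw [Finset.sum_attach (Finset.range (k+1))
        (fun j => (-1:ℝ)^j * newtE N j p * pget N p (k+1-j))]
      have hsum : ∑ j ∈ Finset.range (k+1), (-1:ℝ)^j * newtE N j p * pget N p (k+1-j)
          = ∑ j ∈ Finset.range (k+1), (-1:ℝ)^j * esymmR N j x * psumR N x (k+1-j) := by
        apply Finset.sum_congr rfl
        intro j hj
        have hj' : j < k + 1 := Finset.mem_range.mp hj
        rw [ih j hj' (le_trans (Nat.le_of_lt hj') hkN)]
        have h1 : 1 ≤ k + 1 - j := Nat.le_sub_of_add_le (by omega)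
        have h2 : k + 1 - j - 1 < N := by omega
        have : pget N p (k+1-j) = p ⟨k+1-j-1, h2⟩ := by rw [pget, dif_pos h2]
        rw [this, hp]
        have harg : ((⟨k+1-j-1,h2⟩ : Fin N) : ℕ) + 1 = k+1-j := by
          simp only [Fin.val_mk]; omega
        rw [harg]
      rw [hsum]
      have hnr := newton_real N (k+1) x
      have hk : ((k:ℝ)+1) ≠ 0 := by positivity
      have : ((k+1 : ℕ) : ℝ) = (k:ℝ)+1 := by push_cast; ring
      rw [this] at hnr
      field_simp
      rw [← hnr]

theorem vieta_real (N : ℕ) (x : Fin N → ℝ) (t : ℝ) :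
    ∏ j, (t - x j) = ∑ k ∈ Finset.range (N+1), (-1:ℝ)^k * esymmR N k x * t^(N-k) := by
  have h := Multiset.prod_X_sub_X_eq_sum_esymm (Multiset.map x Finset.univ.val)
  have h2 := congrArg (Polynomial.eval t) h
  simp only [Polynomial.eval_multiset_prod, Multiset.map_map, Function.comp,
    Polynomial.eval_sub, Polynomial.eval_X, Polynomial.eval_C, Polynomial.eval_finset_sum,
    Polynomial.eval_mul, Polynomial.eval_pow, Polynomial.eval_neg, Polynomial.eval_one,
    Multiset.card_map] at h2
  have hcard : Multiset.card (Finset.univ.val : Multiset (Fin N)) = N := by simp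
  rw [hcard] at h2
  rw [Finset.prod_eq_multiset_prod]
  rw [h2]
  apply Finset.sum_congr rfl
  intro k _
  rw [esymmR]
  ring

theorem G_eq (N : ℕ) (x : Fin N → ℝ) (t : ℝ) :
    Gfun N (Fp N x) t = ∏ j, (t - x j) := by
  rw [vieta_real, Gfun]
  apply Finset.sum_congr rfl
  intro k hk
  rw [newtE_eq N x (Fp N x) (fun r => rfl) k (Nat.lt_succ_iff.mp (Finset.mem_range.mp hk))]

theorem mono_eq_of_esymm_eq (N : ℕ) (x y : Fin N → ℝ) (hx : Monotone x) (hy : Monotone y)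
    (h : ∀ k, k ≤ N → esymmR N k x = esymmR N k y) : x = y := by
  have hfun : ∀ t : ℝ, ∏ j, (t - x j) = ∏ j, (t - y j) := by
    intro t
    rw [vieta_real, vieta_real]
    apply Finset.sum_congr rfl
    intro k hk
    rw [h k (Nat.lt_succ_iff.mp (Finset.mem_range.mp hk))]
  have hpoly : (∏ j, (Polynomial.X - Polynomial.C (x j)) : Polynomial ℝ)
      = ∏ j, (Polynomial.X - Polynomial.C (y j)) := by
    apply Polynomial.funext
    intro t
    rw [Polynomial.eval_prod, Polynomial.eval_prod]
    simp only [Polynomial.eval_sub, Polynomial.eval_X, Polynomial.eval_C]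
    exact hfun t
  have hmulti : Multiset.map x Finset.univ.val = Multiset.map y Finset.univ.val := by
    have hx' : (∏ j, (Polynomial.X - Polynomial.C (x j)) : Polynomial ℝ)
        = ((Multiset.map x Finset.univ.val).map fun a => Polynomial.X - Polynomial.C a).prod := by
      rw [Finset.prod_eq_multiset_prod, Multiset.map_map]; rfl
    have hy' : (∏ j, (Polynomial.X - Polynomial.C (y j)) : Polynomial ℝ)
        = ((Multiset.map y Finset.univ.val).map fun a => Polynomial.X - Polynomial.C a).prod := by
      rw [Finset.prod_eq_multiset_prod, Multiset.map_map]; rfl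
    have := congrArg Polynomial.roots (hx'.symm.trans (hpoly.trans hy'))
    rwa [Polynomial.roots_multiset_prod_X_sub_C, Polynomial.roots_multiset_prod_X_sub_C] at this
  have huniv : (Finset.univ.val : Multiset (Fin N)) = ↑(List.finRange N) := rfl
  rw [huniv] at hmulti
  have hlist : (↑(List.map x (List.finRange N)) : Multiset ℝ) = ↑(List.map y (List.finRange N)) := by
    simpa using hmulti
  have hperm : (List.map x (List.finRange N)).Perm (List.map y (List.finRange N)) :=
    Multiset.coe_eq_coe.mp hlist
  rw [← List.ofFn_eq_map, ← List.ofFn_eq_map] at hperm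
  have heq : List.ofFn x = List.ofFn y :=
    List.Perm.eq_of_sortedLE (hx.sortedLE_ofFn) (hy.sortedLE_ofFn) hperm
  exact List.ofFn_inj.mp heq

theorem Fp_inj (N : ℕ) (x y : Fin N → ℝ) (hx : Monotone x) (hy : Monotone y)
    (h : Fp N x = Fp N y) : x = y := by
  apply mono_eq_of_esymm_eq N x y hx hy
  intro k hk
  rw [← newtE_eq N x (Fp N x) (fun r => rfl) k hk, ← newtE_eq N y (Fp N y) (fun r => rfl) k hk, h]

theorem continuous_Fp (N : ℕ) : Continuous (Fp N) := by
  apply continuous_pi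
  intro k
  apply continuous_finset_sum
  intro j _
  exact (continuous_apply j).pow _

theorem isClosed_mono (N : ℕ) : IsClosed {x : Fin N → ℝ | Monotone x} := by
  have : {x : Fin N → ℝ | Monotone x} = ⋂ (a : Fin N) (b : Fin N) (_ : a ≤ b), {x | x a ≤ x b} := by
    ext x
    simp only [Set.mem_setOf_eq, Set.mem_iInter]
    exact ⟨fun h a b hab => h hab, fun h a b hab => h a b hab⟩
  rw [this]
  exact isClosed_iInter fun a => isClosed_iInter fun b => isClosed_iInter fun _ =>
    isClosed_le (continuous_apply a) (continuous_apply b)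

theorem root_stable (N : ℕ) (hN2 : 2 ≤ N) (i : Fin N) (xs : Fin N → ℝ) (hmono : Monotone xs)
    (ε : ℝ) (hε : 0 < ε) :
    ∃ δ > 0, ∀ x : Fin N → ℝ, Monotone x → dist (Fp N x) (Fp N xs) < δ → |x i - xs i| < ε := by
  classical
  set i2 : Fin N := ⟨1, by omega⟩ with hi2
  set R : ℝ := Real.sqrt (Fp N xs i2 + 1) with hR
  have hP2 : Fp N xs i2 = ∑ j, xs j ^ 2 := by simp [Fp, hi2]
  have hP2nonneg : 0 ≤ Fp N xs i2 := by
    rw [hP2]; exact Finset.sum_nonneg fun j _ => sq_nonneg _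
  have hRsq : R ^ 2 = Fp N xs i2 + 1 := Real.sq_sqrt (by linarith)
  have hRnonneg : 0 ≤ R := Real.sqrt_nonneg _
  set K : Set (Fin N → ℝ) :=
    {x | Monotone x ∧ (∀ j, |x j| ≤ R) ∧ ε ≤ |x i - xs i|} with hK
  have hKclosed : IsClosed K := by
    have : K = {x : Fin N → ℝ | Monotone x} ∩ ((⋂ j, {x : Fin N → ℝ | |x j| ≤ R})
        ∩ {x : Fin N → ℝ | ε ≤ |x i - xs i|}) := by
      ext x; simp only [hK, Set.mem_setOf_eq, Set.mem_inter_iff, Set.mem_iInter]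
    rw [this]
    refine (isClosed_mono N).inter (IsClosed.inter ?_ ?_)
    · exact isClosed_iInter fun j => isClosed_le ((continuous_apply j).abs) continuous_const
    · exact isClosed_le continuous_const (((continuous_apply i).sub continuous_const).abs)
  have hKcpt : IsCompact K := by
    apply (isCompact_pi_infinite fun j => isCompact_Icc (a := -R) (b := R)).of_isClosed_subset hKclosed
    intro x hx j
    have := hx.2.1 j
    exact abs_le.mp this
  have hxsK : Fp N xs ∉ Fp N '' K := by
    rintro ⟨x, hxK, hFx⟩
    have := Fp_inj N x xs hxK.1 hmono hFx
    rw [this] at hxK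
    have := hxK.2.2
    simp at this
    linarith
  have hclosedim : IsClosed (Fp N '' K) := (hKcpt.image (continuous_Fp N)).isClosed
  obtain ⟨δ₁, hδ₁pos, hball⟩ := Metric.isOpen_iff.mp hclosedim.isOpen_compl _ hxsK
  refine ⟨min δ₁ 1, by positivity, ?_⟩
  intro x hxmono hdist
  by_contra hcon
  push_neg at hcon
  have hxj : ∀ j, |x j| ≤ R := by
    intro j
    have h1 : dist (Fp N x i2) (Fp N xs i2) ≤ dist (Fp N x) (Fp N xs) := dist_le_pi_dist _ _ i2
    have h2 : dist (Fp N x i2) (Fp N xs i2) < 1 := lt_of_le_of_lt h1 (lt_of_lt_of_le hdist (min_le_right _ _))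
    have h3 : Fp N x i2 = ∑ j, x j ^ 2 := by simp [Fp, hi2]
    have h4 : x j ^ 2 ≤ ∑ j', x j' ^ 2 :=
      Finset.single_le_sum (fun j' _ => sq_nonneg (x j')) (Finset.mem_univ j)
    rw [Real.dist_eq] at h2
    have h5 : x j ^ 2 ≤ R ^ 2 := by
      rw [hRsq]
      have := abs_lt.mp h2
      rw [h3] at this
      linarith [this.1, this.2]
    rw [abs_le]
    constructor <;> nlinarith
  have hxK : x ∈ K := ⟨hxmono, hxj, hcon⟩
  have : Fp N x ∈ Fp N '' K := Set.mem_image_of_mem _ hxK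
  have hmem : Fp N x ∈ Metric.ball (Fp N xs) δ₁ := by
    rw [Metric.mem_ball]
    exact lt_of_lt_of_le hdist (min_le_left _ _)
  exact (hball hmem) this

theorem contDiff_pget (N : ℕ) (m : ℕ) : ContDiff ℝ (⊤ : ℕ∞) (fun p => pget N p m) := by
  unfold pget
  by_cases h : m - 1 < N
  · simp only [dif_pos h]
    exact (ContinuousLinearMap.proj (R := ℝ) (φ := fun _ : Fin N => ℝ) ⟨m-1, h⟩).contDiff
  · simp only [dif_neg h]; exact contDiff_const

theorem contDiff_newtE (N : ℕ) (k : ℕ) : ContDiff ℝ (⊤ : ℕ∞) (newtE N k) := by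
  induction k using Nat.strong_induction_on with
  | _ k ih =>
    match k with
    | 0 => simpa [newtE] using contDiff_const (c := (1:ℝ))
    | (k+1) =>
      have : newtE N (k+1) = fun p => (1/(k+1:ℝ)) * (-1)^(k+2) *
          ∑ j ∈ (Finset.range (k+1)).attach,
            (-1:ℝ)^(j.1) * newtE N j.1 p * pget N p (k+1-j.1) := by
        rw [newtE]
      rw [this]
      apply ContDiff.mul contDiff_const
      apply ContDiff.sum
      intro j _
      exact (contDiff_const.mul (ih j.1 (Nat.lt_succ_of_le (Nat.lt_succ_iff.mp (Finset.mem_range.mp j.2))))).mul (contDiff_pget N _)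

theorem contDiff_Gu (N : ℕ) : ContDiff ℝ (⊤ : ℕ∞) (fun z : (Fin N → ℝ) × ℝ => Gfun N z.1 z.2) := by
  unfold Gfun
  apply ContDiff.sum
  intro k _
  exact (contDiff_const.mul ((contDiff_newtE N k).comp contDiff_fst)).mul
    ((contDiff_id.pow _).comp contDiff_snd)

theorem contDiff_Gderu (N : ℕ) : ContDiff ℝ (⊤ : ℕ∞) (fun z : (Fin N → ℝ) × ℝ => Gder N z.1 z.2) := by
  unfold Gder
  apply ContDiff.sum
  intro k _
  exact (contDiff_const.mul ((contDiff_newtE N k).comp contDiff_fst)).mul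
    ((contDiff_const.mul (contDiff_id.pow _)).comp contDiff_snd)

theorem contDiff_H (N : ℕ) : ContDiff ℝ (⊤ : ℕ∞) (Hfun N) :=
  contDiff_fst.prodMk (contDiff_Gu N)

theorem hasDerivAt_G (N : ℕ) (p : Fin N → ℝ) (t : ℝ) :
    HasDerivAt (fun t => Gfun N p t) (Gder N p t) t := by
  unfold Gfun Gder
  apply HasDerivAt.fun_sum
  intro k _
  simpa [mul_assoc] using ((hasDerivAt_pow (N-k) t).const_mul ((-1:ℝ)^k * newtE N k p))

theorem exists_equiv_deriv (N : ℕ) (z : (Fin N → ℝ) × ℝ) (hz : Gder N z.1 z.2 ≠ 0) :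
    ∃ f' : ((Fin N → ℝ) × ℝ) ≃L[ℝ] ((Fin N → ℝ) × ℝ),
      HasFDerivAt (Hfun N) (f' : ((Fin N → ℝ) × ℝ) →L[ℝ] ((Fin N → ℝ) × ℝ)) z := by
  classical
  have hGu := contDiff_Gu N
  have hL : HasFDerivAt (fun z : (Fin N → ℝ) × ℝ => Gfun N z.1 z.2)
      (fderiv ℝ (fun z : (Fin N → ℝ) × ℝ => Gfun N z.1 z.2) z) z :=
    (hGu.differentiable (by simp) z).hasFDerivAt
  set L := fderiv ℝ (fun z : (Fin N → ℝ) × ℝ => Gfun N z.1 z.2) z with hLdef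
  set M := (ContinuousLinearMap.fst ℝ (Fin N → ℝ) ℝ).prod L with hMdef
  have hM : HasFDerivAt (Hfun N) M z := (hasFDerivAt_fst (p := z)).prodMk hL
  have hcurve : HasDerivAt (fun t => Gfun N z.1 t) (L (0,1)) z.2 := by
    have h1 : HasDerivAt (fun t : ℝ => ((z.1, t) : (Fin N → ℝ) × ℝ)) ((0 : Fin N → ℝ), (1:ℝ)) z.2 :=
      (hasDerivAt_const z.2 z.1).prodMk (hasDerivAt_id z.2)
    have := hL.comp_hasDerivAt z.2 h1
    exact this
  have hc : L (0,1) = Gder N z.1 z.2 := hcurve.unique (hasDerivAt_G N z.1 z.2)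
  have h0 : ∀ v : (Fin N → ℝ) × ℝ, M v = 0 → v = 0 := by
    intro v hv
    obtain ⟨q, s⟩ := v
    have h1 : q = 0 := congrArg Prod.fst hv
    subst h1
    have h2 : L (0, s) = 0 := congrArg Prod.snd hv
    have hv2 : ((0:Fin N → ℝ), s) = s • ((0:Fin N → ℝ), (1:ℝ)) := by
      rw [Prod.smul_mk, smul_zero, smul_eq_mul, mul_one]
    rw [hv2, map_smul, hc, smul_eq_mul, mul_eq_zero] at h2
    rcases h2 with h2 | h2
    · rw [h2]; rfl
    · exact absurd h2 hz
  have hinj : Function.Injective M := by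
    intro a b hab
    have := h0 (a - b) (by rw [map_sub, hab, sub_self])
    exact sub_eq_zero.mp this
  have hsurj : Function.Surjective (M : ((Fin N → ℝ) × ℝ) →ₗ[ℝ] ((Fin N → ℝ) × ℝ)) :=
    (LinearMap.injective_iff_surjective).mp hinj
  let eqv := LinearEquiv.ofBijective (M : ((Fin N → ℝ) × ℝ) →ₗ[ℝ] ((Fin N → ℝ) × ℝ)) ⟨hinj, hsurj⟩
  let eqv' := eqv.toContinuousLinearEquiv
  refine ⟨eqv', ?_⟩
  have hcoe : (eqv' : ((Fin N → ℝ) × ℝ) →L[ℝ] ((Fin N → ℝ) × ℝ)) = M := by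
    ext v <;> rfl
  rw [hcoe]
  exact hM
theorem Gder_ne (N : ℕ) (x : Fin N → ℝ) (i : Fin N) (hsep : ∀ j, j ≠ i → x j ≠ x i) :
    Gder N (Fp N x) (x i) ≠ 0 := by
  classical
  set q : Polynomial ℝ := ∏ j ∈ Finset.univ.erase i, (Polynomial.X - Polynomial.C (x j)) with hqdef
  have hfeq : (fun t => Gfun N (Fp N x) t) = fun t => (t - x i) * q.eval t := by
    funext t
    rw [G_eq, hqdef, Polynomial.eval_prod]
    simp only [Polynomial.eval_sub, Polynomial.eval_X, Polynomial.eval_C]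
    rw [← Finset.mul_prod_erase Finset.univ _ (Finset.mem_univ i)]
  have hq : HasDerivAt (fun t => (t - x i) * q.eval t)
      (1 * q.eval (x i) + (x i - x i) * q.derivative.eval (x i)) (x i) :=
    ((hasDerivAt_id (x i)).sub_const (x i)).mul (q.hasDerivAt (x i))
  have h2 : Gder N (Fp N x) (x i) = q.eval (x i) := by
    have hG := hasDerivAt_G N (Fp N x) (x i)
    rw [hfeq] at hG
    have := hG.unique hq
    rw [this]; ring
  rw [h2, Polynomial.eval_prod]
  apply Finset.prod_ne_zero_iff.mpr
  intro j hj
  simp only [Polynomial.eval_sub, Polynomial.eval_X, Polynomial.eval_C, sub_ne_zero]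
  exact fun hh => (hsep j (Finset.mem_erase.mp hj).1) hh.symm

theorem G_root (N : ℕ) (x : Fin N → ℝ) (i : Fin N) : Gfun N (Fp N x) (x i) = 0 := by
  rw [G_eq]
  exact Finset.prod_eq_zero (Finset.mem_univ i) (by ring)


/-- Smoothness of a separated ordered root as a function of the power sums:
if `x*` is nondecreasing and its `i`-th coordinate is strictly separated from its
neighbors, then there is a neighborhood `U` of `F(x*)` (where
`F(x) k = ∑_j x_j^(k+1)` are the first `N` power sums) and a `C^∞` function `φ`
on `U` with `φ(F(x)) = x i` for every nondecreasing `x` with `F(x) ∈ U`. -/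
theorem smooth_single_root_of_powerSums (N : ℕ) (hN : 1 ≤ N) (i : Fin N)
    (F : (Fin N → ℝ) → (Fin N → ℝ))
    (hF : ∀ (x : Fin N → ℝ) (k : Fin N), F x k = ∑ j, x j ^ ((k : ℕ) + 1))
    (xs : Fin N → ℝ) (hmono : Monotone xs)
    (hleft : ∀ j : Fin N, (j : ℕ) + 1 = (i : ℕ) → xs j < xs i)
    (hright : ∀ j : Fin N, (i : ℕ) + 1 = (j : ℕ) → xs i < xs j) :
    ∃ U : Set (Fin N → ℝ), IsOpen U ∧ F xs ∈ U ∧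
      ∃ φ : (Fin N → ℝ) → ℝ, ContDiffOn ℝ (⊤ : ℕ∞) φ U ∧
        ∀ x : Fin N → ℝ, Monotone x → F x ∈ U → φ (F x) = x i := by
  classical
  have hFeq : F = Fp N := funext fun x => funext fun k => hF x k
  subst hFeq
  by_cases hN1 : N = 1
  · refine ⟨Set.univ, isOpen_univ, Set.mem_univ _, fun p => p i, ?_, ?_⟩
    · exact ((ContinuousLinearMap.proj (R := ℝ) (φ := fun _ : Fin N => ℝ) i).contDiff).contDiffOn
    · intro x _ _
      have hju : ∀ j : Fin N, j = i := fun j => Fin.ext (by have := j.isLt; have := i.isLt; omega)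
      have hi0 : (i:ℕ) = 0 := by have := i.isLt; omega
      show (∑ j, x j ^ ((i:ℕ)+1)) = x i
      rw [Finset.sum_congr rfl (fun j _ => by rw [hju j] : ∀ j ∈ Finset.univ, x j ^ ((i:ℕ)+1) = x i ^ ((i:ℕ)+1))]
      rw [Finset.sum_const, Finset.card_univ, Fintype.card_fin]
      simp [nsmul_eq_mul, hN1, hi0]
  · have hN2 : 2 ≤ N := by omega
    have hsep : ∀ j, j ≠ i → xs j ≠ xs i := by
      intro j hj
      rcases lt_or_gt_of_ne hj with h | h
      · have hji : (j:ℕ) < (i:ℕ) := h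
        have hi1 : 1 ≤ (i:ℕ) := by omega
        set j' : Fin N := ⟨(i:ℕ)-1, by have := i.isLt; omega⟩ with hj'
        have h1 : xs j ≤ xs j' := hmono (by rw [Fin.le_def]; simp [hj']; omega)
        have h2 : xs j' < xs i := hleft j' (by simp [hj']; omega)
        exact ne_of_lt (lt_of_le_of_lt h1 h2)
      · have hij : (i:ℕ) < (j:ℕ) := h
        set j' : Fin N := ⟨(i:ℕ)+1, by have := j.isLt; omega⟩ with hj'
        have h1 : xs j' ≤ xs j := hmono (by rw [Fin.le_def]; simp [hj']; omega)
        have h2 : xs i < xs j' := hright j' (by simp [hj'])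
        exact ne_of_gt (lt_of_lt_of_le h2 h1)
    set p0 := Fp N xs with hp0
    set z0 : (Fin N → ℝ) × ℝ := (p0, xs i) with hz0
    have hc0 : Gder N z0.1 z0.2 ≠ 0 := Gder_ne N xs i hsep
    obtain ⟨f', hf'⟩ := exists_equiv_deriv N z0 hc0
    have hHat : ContDiffAt ℝ (⊤ : ℕ∞) (Hfun N) z0 := (contDiff_H N).contDiffAt
    set e := hHat.toOpenPartialHomeomorph (Hfun N) hf' (by simp) with hedef
    have hecoe : ⇑e = Hfun N := ContDiffAt.toOpenPartialHomeomorph_coe hHat hf' (by simp)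
    have hsrc : z0 ∈ e.source := ContDiffAt.mem_toOpenPartialHomeomorph_source hHat hf' (by simp)
    have hHz0 : Hfun N z0 = (p0, 0) := by
      show (z0.1, Gfun N z0.1 z0.2) = _
      rw [hz0, hp0]
      exact Prod.ext rfl (G_root N xs i)
    have htgt : (p0, 0) ∈ e.target := by
      have := ContDiffAt.image_mem_toOpenPartialHomeomorph_target hHat hf' (by simp)
      rwa [hHz0] at this
    have hsymm0 : e.symm (p0, 0) = z0 := by
      have h1 : e z0 = (p0, 0) := by rw [hecoe]; exact hHz0
      rw [← h1]
      exact e.left_inv hsrc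
    set S := {z : (Fin N → ℝ) × ℝ | Gder N z.1 z.2 ≠ 0} with hSdef
    have hSopen : IsOpen S :=
      isOpen_compl_singleton.preimage (contDiff_Gderu N).continuous
    set T := e.target ∩ e.symm ⁻¹' S with hTdef
    have hTopen : IsOpen T := e.continuousOn_symm.isOpen_inter_preimage e.open_target hSopen
    set U0 := (fun p : Fin N → ℝ => (p, (0:ℝ))) ⁻¹' T with hU0def
    have hU0open : IsOpen U0 := hTopen.preimage (continuous_id.prodMk continuous_const)
    have hmemU0 : p0 ∈ U0 := by
      refine Set.mem_preimage.mpr ⟨htgt, ?_⟩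
      rw [Set.mem_preimage, hsymm0]
      exact hc0
    obtain ⟨ρ, hρpos, hρ⟩ := Metric.isOpen_iff.mp e.open_source z0 hsrc
    obtain ⟨δ₀, hδ₀pos, hδ₀⟩ := root_stable N hN2 i xs hmono (ρ/2) (by positivity)
    set δ := min δ₀ (ρ/2) with hδdef
    set U := Metric.ball p0 δ ∩ U0 with hUdef
    refine ⟨U, Metric.isOpen_ball.inter hU0open,
      ⟨Metric.mem_ball_self (by positivity), hmemU0⟩,
      fun p => (e.symm (p, 0)).2, ?_, ?_⟩
    · intro p hp
      have hpT : (p, (0:ℝ)) ∈ T := hp.2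
      have hw : e.symm (p, 0) ∈ S := hpT.2
      obtain ⟨g', hg'⟩ := exists_equiv_deriv N (e.symm (p, 0)) hw
      have hsymmCD : ContDiffAt ℝ (⊤ : ℕ∞) e.symm (p, 0) := by
        apply e.contDiffAt_symm hpT.1
        · rw [hecoe]; exact hg'
        · rw [hecoe]; exact (contDiff_H N).contDiffAt
      have hcomp : ContDiffAt ℝ (⊤ : ℕ∞) (fun p' : Fin N → ℝ => e.symm (p', 0)) p :=
        hsymmCD.comp p (contDiffAt_id.prodMk contDiffAt_const)
      exact (contDiff_snd.contDiffAt.comp p hcomp).contDiffWithinAt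
    · intro x hxmono hxU
      have hdist : dist (Fp N x) p0 < δ := Metric.mem_ball.mp hxU.1
      have hroot : |x i - xs i| < ρ/2 := hδ₀ x hxmono (lt_of_lt_of_le hdist (min_le_left _ _))
      have hz1 : (Fp N x, x i) ∈ Metric.ball z0 ρ := by
        rw [Metric.mem_ball, Prod.dist_eq]
        apply max_lt
        · exact lt_of_lt_of_le hdist (le_trans (min_le_right _ _) (by linarith))
        · rw [Real.dist_eq]; linarith
      have hz1src : (Fp N x, x i) ∈ e.source := hρ hz1
      have hxT : (Fp N x, (0:ℝ)) ∈ T := hxU.2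
      have hrinv : e (e.symm (Fp N x, 0)) = ((Fp N x, 0) : (Fin N → ℝ) × ℝ) := e.right_inv hxT.1
      have hHx : e (Fp N x, x i) = ((Fp N x, 0) : (Fin N → ℝ) × ℝ) := by
        rw [hecoe]
        exact Prod.ext rfl (G_root N x i)
      have hwsrc : e.symm (Fp N x, 0) ∈ e.source := e.map_target hxT.1
      have heq := e.injOn hz1src hwsrc (hHx.trans hrinv.symm)
      exact (congrArg Prod.snd heq).symm
end

section
/- Let N ≥ 2 and let x, y ∈ ℝ^N satisfy x_1 ≥ x_2 ≥ … ≥ x_{N−1} ≥ |x_N| and y_1 ≥ y_2 ≥ … ≥ y_{N−1} ≥ |y_N|. If Σ_{j=1}^N x_j^{2k} = Σ_{j=1}^N y_j^{2k} for every k ∈ {1,…,N−1} and ∏_{j=1}^N x_j = ∏_{j=1}^N y_j, then x = y. -/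
open Finset Polynomial

private lemma myEsymm_rec (N k : ℕ) (u : Fin N → ℝ) :
    (k : ℝ) * (Finset.univ.val.map u).esymm k = (-1) ^ (k + 1) *
      ∑ a ∈ (Finset.HasAntidiagonal.antidiagonal k).filter (fun a => a.1 < k),
        (-1) ^ a.1 * (Finset.univ.val.map u).esymm a.1 * (∑ j, u j ^ a.2) := by
  have h := congrArg (MvPolynomial.aeval u) (MvPolynomial.mul_esymm_eq_sum (Fin N) ℝ k)
  simpa [MvPolynomial.aeval_esymm_eq_multiset_esymm, MvPolynomial.psum, map_sum, map_mul,
    map_pow, map_natCast] using h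

private lemma myEsymm_congr (N : ℕ) (u v : Fin N → ℝ)
    (hp : ∀ k : ℕ, 1 ≤ k → k ≤ N - 1 → ∑ j, u j ^ k = ∑ j, v j ^ k)
    (hprod : ∏ j, u j = ∏ j, v j) :
    ∀ k, (Finset.univ.val.map u).esymm k = (Finset.univ.val.map v).esymm k := by
  have key : ∀ k, k ≤ N - 1 →
      (Finset.univ.val.map u).esymm k = (Finset.univ.val.map v).esymm k := by
    intro k
    induction k using Nat.strong_induction_on with
    | _ k ih =>
      intro hk
      rcases Nat.eq_zero_or_pos k with h0 | h1
      · subst h0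
        simp [Multiset.esymm, Multiset.powersetCard_zero_left]
      · have r1 := myEsymm_rec N k u
        have r2 := myEsymm_rec N k v
        have hsum : ∑ a ∈ (Finset.HasAntidiagonal.antidiagonal k).filter (fun a => a.1 < k),
            (-1 : ℝ) ^ a.1 * (Finset.univ.val.map u).esymm a.1 * (∑ j, u j ^ a.2)
            = ∑ a ∈ (Finset.HasAntidiagonal.antidiagonal k).filter (fun a => a.1 < k),
            (-1 : ℝ) ^ a.1 * (Finset.univ.val.map v).esymm a.1 * (∑ j, v j ^ a.2) := by
          apply Finset.sum_congr rfl
          intro a ha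
          simp only [Finset.mem_filter, Finset.HasAntidiagonal.mem_antidiagonal] at ha
          have h2 : 1 ≤ a.2 := by omega
          have h3 : a.2 ≤ N - 1 := by omega
          rw [ih a.1 (by omega) (by omega), hp a.2 h2 h3]
        have : (k : ℝ) * (Finset.univ.val.map u).esymm k
            = (k : ℝ) * (Finset.univ.val.map v).esymm k := by
          rw [r1, r2, hsum]
        exact mul_left_cancel₀ (by positivity) this
  intro k
  rcases lt_trichotomy k N with h | h | h
  · exact key k (by omega)
  · rw [Finset.esymm_map_val, Finset.esymm_map_val]
    have hcard : (Finset.univ : Finset (Fin N)).card = k := by simp [h]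
    rw [← hcard, Finset.powersetCard_self]
    simpa using hprod
  · rw [Finset.esymm_map_val, Finset.esymm_map_val]
    have : (Finset.univ : Finset (Fin N)).powersetCard k = ∅ := by
      apply Finset.powersetCard_eq_empty.mpr
      simpa using h
    simp [this]

private lemma myMultiset_eq (N : ℕ) (u v : Fin N → ℝ)
    (h : ∀ k, (Finset.univ.val.map u).esymm k = (Finset.univ.val.map v).esymm k) :
    Multiset.map u Finset.univ.val = Multiset.map v Finset.univ.val := by
  have hcu : Multiset.card (Multiset.map u Finset.univ.val) = N := by simp
  have hcv : Multiset.card (Multiset.map v Finset.univ.val) = N := by simp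
  have hpoly : ((Finset.univ.val.map u).map (fun r => X + C r)).prod
      = ((Finset.univ.val.map v).map (fun r => X + C r)).prod := by
    rw [Multiset.prod_X_add_C_eq_sum_esymm, Multiset.prod_X_add_C_eq_sum_esymm, hcu, hcv]
    exact Finset.sum_congr rfl fun j _ => by rw [h]
  have key : ∀ w : Fin N → ℝ,
      ((Finset.univ.val.map w).map (fun r => X + C r)).prod.roots
      = (Finset.univ.val.map w).map Neg.neg := by
    intro w
    have : (Finset.univ.val.map w).map (fun r => X + C r)
        = ((Finset.univ.val.map w).map Neg.neg).map (fun a => X - C a) := by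
      simp only [Multiset.map_map]
      apply Multiset.map_congr rfl
      intro a _
      simp [sub_neg_eq_add]
    rw [this, Polynomial.roots_multiset_prod_X_sub_C]
  have hneg : (Finset.univ.val.map u).map Neg.neg = (Finset.univ.val.map v).map Neg.neg := by
    rw [← key u, ← key v, hpoly]
  have := congrArg (Multiset.map Neg.neg) hneg
  simpa [Multiset.map_map, Function.comp_def] using this

private lemma myEq_of_sorted (N : ℕ) (u v : Fin N → ℝ)
    (hu : ∀ i j : Fin N, i ≤ j → u j ≤ u i) (hv : ∀ i j : Fin N, i ≤ j → v j ≤ v i)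
    (h : Multiset.map u Finset.univ.val = Multiset.map v Finset.univ.val) : u = v := by
  have huniv : (Finset.univ : Finset (Fin N)).val = ↑(List.finRange N) := by
    rw [Fin.univ_def]
  have hmu : Multiset.map u Finset.univ.val = ↑(List.ofFn u) := by
    rw [huniv, List.ofFn_eq_map]; rfl
  have hmv : Multiset.map v Finset.univ.val = ↑(List.ofFn v) := by
    rw [huniv, List.ofFn_eq_map]; rfl
  rw [hmu, hmv] at h
  have hperm : (List.ofFn u).Perm (List.ofFn v) := Multiset.coe_eq_coe.mp h
  have hsu : (List.ofFn u).Pairwise (· ≥ ·) :=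
    List.pairwise_ofFn.mpr fun i j hij => hu i j hij.le
  have hsv : (List.ofFn v).Pairwise (· ≥ ·) :=
    List.pairwise_ofFn.mpr fun i j hij => hv i j hij.le
  exact List.ofFn_injective (List.Perm.eq_of_pairwise' hsu hsv hperm)

/-- Injectivity of the basic invariant-polynomial map of type `D_N` on the closed
Weyl chamber: if `x, y` satisfy `x 1 ≥ … ≥ x (N-1) ≥ |x N|` (and similarly for
`y`), have the same even power sums of orders `2, 4, …, 2(N-1)`, and the same
product of coordinates, then `x = y`. -/
theorem typeD_invariants_inj (N : ℕ) (hN : 2 ≤ N) (x y : Fin N → ℝ)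
    (hx1 : ∀ i j : Fin N, i ≤ j → (j : ℕ) + 1 < N → x j ≤ x i)
    (hx2 : |x ⟨N - 1, by omega⟩| ≤ x ⟨N - 2, by omega⟩)
    (hy1 : ∀ i j : Fin N, i ≤ j → (j : ℕ) + 1 < N → y j ≤ y i)
    (hy2 : |y ⟨N - 1, by omega⟩| ≤ y ⟨N - 2, by omega⟩)
    (hp : ∀ k : ℕ, 1 ≤ k → k ≤ N - 1 → ∑ j, x j ^ (2 * k) = ∑ j, y j ^ (2 * k))
    (hprod : ∏ j, x j = ∏ j, y j) :
    x = y := by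
  set l : Fin N := ⟨N - 1, by omega⟩ with hl
  set m : Fin N := ⟨N - 2, by omega⟩ with hm
  -- nonnegativity away from last coordinate
  have hxnn : ∀ j : Fin N, (j : ℕ) + 1 < N → 0 ≤ x j := by
    intro j hj
    have h1 : x m ≤ x j := hx1 j m (by simp [hm, Fin.le_def]; omega) (by simp [hm]; omega)
    have h2 : 0 ≤ x m := le_trans (abs_nonneg _) hx2
    linarith
  have hynn : ∀ j : Fin N, (j : ℕ) + 1 < N → 0 ≤ y j := by
    intro j hj
    have h1 : y m ≤ y j := hy1 j m (by simp [hm, Fin.le_def]; omega) (by simp [hm]; omega)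
    have h2 : 0 ≤ y m := le_trans (abs_nonneg _) hy2
    linarith
  -- squares
  set u : Fin N → ℝ := fun j => x j ^ 2 with hu
  set v : Fin N → ℝ := fun j => y j ^ 2 with hv
  have hsq_anti : ∀ (w : Fin N → ℝ),
      (∀ i j : Fin N, i ≤ j → (j : ℕ) + 1 < N → w j ≤ w i) →
      (|w l| ≤ w m) →
      (∀ i j : Fin N, i ≤ j → (w j) ^ 2 ≤ (w i) ^ 2) := by
    intro w hw1 hw2 i j hij
    have hwm : 0 ≤ w m := le_trans (abs_nonneg _) hw2
    have hwnn : ∀ j : Fin N, (j : ℕ) + 1 < N → 0 ≤ w j := by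
      intro j hj
      have h1 : w m ≤ w j := hw1 j m (by simp [hm, Fin.le_def]; omega) (by simp [hm]; omega)
      linarith
    by_cases hjl : (j : ℕ) + 1 < N
    · have hil : (i : ℕ) + 1 < N := by
        have := hij; rw [Fin.le_def] at this; omega
      exact pow_le_pow_left₀ (hwnn j hjl) (hw1 i j hij hjl) 2
    · -- j = l
      have hjeq : j = l := by
        apply Fin.ext; simp [hl]; omega
      subst hjeq
      by_cases hil : (i : ℕ) + 1 < N
      · have h1 : (w l) ^ 2 = |w l| ^ 2 := (sq_abs _).symm
        have h2 : |w l| ^ 2 ≤ (w m) ^ 2 := pow_le_pow_left₀ (abs_nonneg _) hw2 2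
        have h3 : (w m) ^ 2 ≤ (w i) ^ 2 := by
          have hmi : w m ≤ w i := hw1 i m (by simp [hm, Fin.le_def]; omega) (by simp [hm]; omega)
          exact pow_le_pow_left₀ hwm hmi 2
        linarith
      · have : i = l := by apply Fin.ext; simp [hl]; omega
        subst this; exact le_refl _
  have hu_anti : ∀ i j : Fin N, i ≤ j → u j ≤ u i := fun i j hij =>
    hsq_anti x hx1 hx2 i j hij
  have hv_anti : ∀ i j : Fin N, i ≤ j → v j ≤ v i := fun i j hij =>
    hsq_anti y hy1 hy2 i j hij
  -- power sums of squares
  have hpu : ∀ k : ℕ, 1 ≤ k → k ≤ N - 1 → ∑ j, u j ^ k = ∑ j, v j ^ k := by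
    intro k h1 h2
    have := hp k h1 h2
    simpa [hu, hv, ← pow_mul] using this
  have hprodu : ∏ j, u j = ∏ j, v j := by
    have : (∏ j, x j) ^ 2 = (∏ j, y j) ^ 2 := by rw [hprod]
    simpa [hu, hv, ← Finset.prod_pow] using this
  have huv : u = v :=
    myEq_of_sorted N u v hu_anti hv_anti
      (myMultiset_eq N u v (myEsymm_congr N u v hpu hprodu))
  -- conclude equality coordinatewise
  have hxy : ∀ j : Fin N, (j : ℕ) + 1 < N → x j = y j := by
    intro j hj
    have h1 : x j ^ 2 = y j ^ 2 := congrFun huv j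
    have := (sq_eq_sq_iff_abs_eq_abs _ _).mp h1
    rwa [abs_of_nonneg (hxnn j hj), abs_of_nonneg (hynn j hj)] at this
  have habs : |x l| = |y l| := by
    have h1 : x l ^ 2 = y l ^ 2 := congrFun huv l
    exact (sq_eq_sq_iff_abs_eq_abs _ _).mp h1
  funext j
  by_cases hj : (j : ℕ) + 1 < N
  · exact hxy j hj
  · have hjeq : j = l := by apply Fin.ext; simp [hl]; omega
    subst hjeq
    -- prefix product
    have hPeq : ∏ i ∈ Finset.univ.erase l, x i = ∏ i ∈ Finset.univ.erase l, y i := by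
      apply Finset.prod_congr rfl
      intro i hi
      have hil : i ≠ l := (Finset.mem_erase.mp hi).1
      apply hxy
      have : (i : ℕ) < N := i.isLt
      have : (i : ℕ) ≠ N - 1 := fun hc => hil (Fin.ext (by simp [hl, hc]))
      omega
    have hsplit : ∀ w : Fin N → ℝ, (∏ i ∈ Finset.univ.erase l, w i) * w l = ∏ i, w i := by
      intro w
      rw [mul_comm]
      exact Finset.mul_prod_erase Finset.univ w (Finset.mem_univ l)
    by_cases hP : (∏ i ∈ Finset.univ.erase l, x i) = 0
    · -- some non-last coordinate of x is zero, hence x l = 0 = y l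
      obtain ⟨i, hi, hxi⟩ := Finset.prod_eq_zero_iff.mp hP
      have hil : i ≠ l := (Finset.mem_erase.mp hi).1
      have hiN : (i : ℕ) + 1 < N := by
        have : (i : ℕ) < N := i.isLt
        have : (i : ℕ) ≠ N - 1 := fun hc => hil (Fin.ext (by simp [hl, hc]))
        omega
      have hmi : x m ≤ x i := hx1 i m (by simp [hm, Fin.le_def]; omega) (by simp [hm]; omega)
      have hxl0 : |x l| = 0 := le_antisymm (by rw [hxi] at hmi; linarith [hx2]) (abs_nonneg _)
      have hyl0 : |y l| = 0 := by rw [← habs]; exact hxl0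
      rw [abs_eq_zero] at hxl0 hyl0
      rw [hxl0, hyl0]
    · have := hprod
      rw [← hsplit x, ← hsplit y, hPeq] at this
      have hP' : (∏ i ∈ Finset.univ.erase l, y i) ≠ 0 := by rwa [← hPeq]
      exact mul_left_cancel₀ hP' this
end

section
/- Let x₁, x₂, y₁, y₂ ∈ ℝ satisfy 0 ≤ x₂ < x₁ and 0 ≤ y₂ < y₁. Then (sgn(x₁ − y₁) − sgn(x₂ − y₂)) · ( (x₁ + x₂)/(x₁ − x₂) − (y₁ + y₂)/(y₁ − y₂) ) ≤ 0, where sgn is the sign function with sgn(0) = 0. -/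
/-- Monotonicity of `Ψ(u,v) = (u+v)/(u-v)`: nonincreasing in `u`, nondecreasing in `v`. -/
lemma wishart_psi_mono (u v u' v' : ℝ) (hv : 0 ≤ v) (hvv : v ≤ v') (hv'u : v' < u)
    (huu' : u ≤ u') : (u' + v) / (u' - v) ≤ (u + v') / (u - v') := by
  have h1 : 0 < u - v' := by linarith
  have h2 : 0 < u' - v := by linarith
  rw [div_le_div_iff₀ h2 h1]
  nlinarith

/-- Pairwise ℓ¹-dissipativity of the Wishart interaction `Ψ(u,v) = (u+v)/(u-v)`:
for `0 ≤ x₂ < x₁` and `0 ≤ y₂ < y₁`,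
`(sgn(x₁-y₁) - sgn(x₂-y₂)) (Ψ(x₁,x₂) - Ψ(y₁,y₂)) ≤ 0`. -/
theorem wishart_pair_dissipative (x₁ x₂ y₁ y₂ : ℝ)
    (hx2 : 0 ≤ x₂) (hx : x₂ < x₁) (hy2 : 0 ≤ y₂) (hy : y₂ < y₁) :
    (Real.sign (x₁ - y₁) - Real.sign (x₂ - y₂)) *
        ((x₁ + x₂) / (x₁ - x₂) - (y₁ + y₂) / (y₁ - y₂)) ≤ 0 := by
  rcases lt_trichotomy x₁ y₁ with h1 | h1 | h1 <;>
    rcases lt_trichotomy x₂ y₂ with h2 | h2 | h2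
  · rw [Real.sign_of_neg (by linarith : x₁ - y₁ < 0),
      Real.sign_of_neg (by linarith : x₂ - y₂ < 0)]
    ring_nf
    simp
  · subst h2
    rw [Real.sign_of_neg (by linarith : x₁ - y₁ < 0), sub_self, Real.sign_zero]
    have := wishart_psi_mono x₁ x₂ y₁ x₂ hx2 le_rfl hx (le_of_lt h1)
    nlinarith
  · rw [Real.sign_of_neg (by linarith : x₁ - y₁ < 0),
      Real.sign_of_pos (by linarith : 0 < x₂ - y₂)]
    have := wishart_psi_mono x₁ y₂ y₁ x₂ hy2 (le_of_lt h2) hx (le_of_lt h1)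
    nlinarith
  · subst h1
    rw [sub_self, Real.sign_zero, Real.sign_of_neg (by linarith : x₂ - y₂ < 0)]
    have := wishart_psi_mono x₁ x₂ x₁ y₂ hx2 (le_of_lt h2) hy le_rfl
    nlinarith
  · subst h1; subst h2; simp
  · subst h1
    rw [sub_self, Real.sign_zero, Real.sign_of_pos (by linarith : 0 < x₂ - y₂)]
    have := wishart_psi_mono x₁ y₂ x₁ x₂ hy2 (le_of_lt h2) hx le_rfl
    nlinarith
  · rw [Real.sign_of_pos (by linarith : 0 < x₁ - y₁),
      Real.sign_of_neg (by linarith : x₂ - y₂ < 0)]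
    have := wishart_psi_mono y₁ x₂ x₁ y₂ hx2 (le_of_lt h2) hy (le_of_lt h1)
    nlinarith
  · subst h2
    rw [Real.sign_of_pos (by linarith : 0 < x₁ - y₁), sub_self, Real.sign_zero]
    have := wishart_psi_mono y₁ x₂ x₁ x₂ hx2 le_rfl hy (le_of_lt h1)
    nlinarith
  · rw [Real.sign_of_pos (by linarith : 0 < x₁ - y₁),
      Real.sign_of_pos (by linarith : 0 < x₂ - y₂)]
    ring_nf
    simp
end

section
/- Let N ≥ 2, and for 1 ≤ i < j ≤ N let m_{ij} ≥ 0 be real constants; set m_{ji} = m_{ij}. Let x, y ∈ ℝ^N satisfy x_1 > x_2 > … > x_N and y_1 > y_2 > … > y_N. Then Σ_{i=1}^N sgn(x_i − y_i) · ( Σ_{j≠i} m_{ij}/(x_i − x_j) − Σ_{j≠i} m_{ij}/(y_i − y_j) ) ≤ 0, where sgn is the sign function with sgn(0) = 0. -/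
lemma sign_sub_mul_sub_nonneg (u v : ℝ) :
    0 ≤ (Real.sign u - Real.sign v) * (u - v) := by
  rcases lt_trichotomy u 0 with hu | hu | hu <;>
    rcases lt_trichotomy v 0 with hv | hv | hv <;>
    simp only [Real.sign_of_pos, Real.sign_of_neg, Real.sign_zero, hu, hv] <;>
    nlinarith

lemma pair_nonpos (m a b su sv : ℝ) (hm : 0 ≤ m) (hab : 0 < a * b)
    (hs : 0 ≤ (su - sv) * (a - b)) :
    su * (m / a - m / b) + sv * (m / (-a) - m / (-b)) ≤ 0 := by
  have ha : a ≠ 0 := fun h => by simp [h] at hab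
  have hb : b ≠ 0 := fun h => by simp [h] at hab
  have key : su * (m / a - m / b) + sv * (m / (-a) - m / (-b))
      = -(m * ((su - sv) * (a - b)) / (a * b)) := by
    rw [div_neg, div_neg]
    field_simp
    ring
  rw [key]
  have h0 : 0 ≤ m * ((su - sv) * (a - b)) / (a * b) :=
    div_nonneg (mul_nonneg hm hs) hab.le
  linarith

/-- ℓ¹-dissipativity of the Dyson-type singular force with constant nonnegative
symmetric multiplicities: for strictly decreasing `x` and `y`,
`∑_i sgn(x i - y i) (∑_{j≠i} m i j/(x i - x j) - ∑_{j≠i} m i j/(y i - y j)) ≤ 0`. -/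
theorem dyson_force_l1_dissipative (N : ℕ) (hN : 2 ≤ N) (m : Fin N → Fin N → ℝ)
    (hm0 : ∀ i j, 0 ≤ m i j) (hmsymm : ∀ i j, m i j = m j i)
    (x y : Fin N → ℝ) (hx : StrictAnti x) (hy : StrictAnti y) :
    ∑ i, Real.sign (x i - y i) *
        ((∑ j ∈ Finset.univ.erase i, m i j / (x i - x j)) -
          ∑ j ∈ Finset.univ.erase i, m i j / (y i - y j)) ≤ 0 := by
  set F : Fin N → Fin N → ℝ := fun i j =>
    Real.sign (x i - y i) * (m i j / (x i - x j) - m i j / (y i - y j)) with hF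
  have hstep : ∀ i ∈ Finset.univ, Real.sign (x i - y i) *
      ((∑ j ∈ Finset.univ.erase i, m i j / (x i - x j)) -
        ∑ j ∈ Finset.univ.erase i, m i j / (y i - y j))
      = ∑ j ∈ Finset.univ.erase i, F i j := by
    intro i _
    rw [← Finset.sum_sub_distrib, Finset.mul_sum]
  rw [Finset.sum_congr rfl hstep]
  -- pairwise bound
  have hpair : ∀ i j : Fin N, i ≠ j → F i j + F j i ≤ 0 := by
    intro i j hij
    have hab : 0 < (x i - x j) * (y i - y j) := by
      rcases lt_or_gt_of_ne hij with h | h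
      · exact mul_pos (sub_pos.mpr (hx h)) (sub_pos.mpr (hy h))
      · exact mul_pos_of_neg_of_neg (sub_neg.mpr (hx h)) (sub_neg.mpr (hy h))
    have hs : 0 ≤ (Real.sign (x i - y i) - Real.sign (x j - y j)) *
        ((x i - x j) - (y i - y j)) := by
      have := sign_sub_mul_sub_nonneg (x i - y i) (x j - y j)
      have e : (x i - y i) - (x j - y j) = (x i - x j) - (y i - y j) := by ring
      rwa [e] at this
    have hmain := pair_nonpos (m i j) (x i - x j) (y i - y j)
      (Real.sign (x i - y i)) (Real.sign (x j - y j)) (hm0 i j) hab hs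
    have hFdef : ∀ a b : Fin N, F a b =
        Real.sign (x a - y a) * (m a b / (x a - x b) - m a b / (y a - y b)) :=
      fun a b => rfl
    have e1 : x j - x i = -(x i - x j) := by ring
    have e2 : y j - y i = -(y i - y j) := by ring
    calc F i j + F j i
        = Real.sign (x i - y i) * (m i j / (x i - x j) - m i j / (y i - y j)) +
          Real.sign (x j - y j) * (m i j / (x j - x i) - m i j / (y j - y i)) := by
          rw [hFdef, hFdef, hmsymm j i]
      _ = Real.sign (x i - y i) * (m i j / (x i - x j) - m i j / (y i - y j)) +
          Real.sign (x j - y j) *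
            (m i j / (-(x i - x j)) - m i j / (-(y i - y j))) := by rw [e1, e2]
      _ ≤ 0 := hmain
  -- symmetry of the double sum
  have hswap : (∑ i, ∑ j ∈ Finset.univ.erase i, F i j)
      = ∑ i, ∑ j ∈ Finset.univ.erase i, F j i := by
    refine Finset.sum_comm' ?_
    intro i j
    simp [ne_comm, and_comm]
  have h2 : (∑ i, ∑ j ∈ Finset.univ.erase i, F i j) +
      (∑ i, ∑ j ∈ Finset.univ.erase i, F i j)
      = ∑ i, ∑ j ∈ Finset.univ.erase i, (F i j + F j i) := by
    nth_rewrite 2 [hswap]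
    rw [← Finset.sum_add_distrib]
    exact Finset.sum_congr rfl fun i _ => (Finset.sum_add_distrib).symm
  have hle : ∑ i, ∑ j ∈ Finset.univ.erase i, (F i j + F j i) ≤ 0 := by
    refine Finset.sum_nonpos fun i _ => Finset.sum_nonpos fun j hj => ?_
    exact hpair i j (Finset.ne_of_mem_erase hj).symm
  linarith [h2 ▸ hle]
end
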